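/- arXiv:1502.01456 — 4 statements merged into one kernel-verified Lean document; each statement's English description precedes it below -/
import Mathlib

section
/- The optimal aggregate charging profile (s*_1,...,s*_T) of the offline problem — minimizing sum_{t=1}^T f(s_t + l_t) subject to the cumulative demand constraints — is the same for every strictly convex, increasing, differentiable cost function f. In particular, it coincides with the minimizer of the load variance sum_{t=1}^T (s_t + l_t − L̄)^2, where L̄ = (sum_t (s_t + l_t))/T. -/
open Finset

/-- Feasibility of an aggregate profile `s` with respect to cumulative demand
bounds: `D⁻(n) ≤ s_1 + ... + s_n ≤ D⁺(n)` for all `n = 1,...,T`. -/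
def AggFeasible (T : ℕ) (Dm Dp : ℕ → ℝ) (s : ℕ → ℝ) : Prop :=
  ∀ n, 1 ≤ n → n ≤ T →
    Dm n ≤ ∑ t ∈ Finset.Icc 1 n, s t ∧ ∑ t ∈ Finset.Icc 1 n, s t ≤ Dp n

/-!
Moving an amount `ε` of charging from period `n + 1` to period `n` only changes the `n`-th
partial sum, so at an `f`-optimum such a move is blocked by a constraint whenever it would
bring the loads `s_n + l_n` and `s_{n+1} + l_{n+1}` closer together, which strict convexity
would make profitable. This local condition does not mention `f`, and Abel summation turns
it into the first-order condition `∑ (s_t + l_t) (w_t - s_t) ≥ 0` for every feasible `w`,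
i.e. `s` minimizes the convex quadratic `∑ (s_t + l_t)²` over the feasible polytope. Two
profiles satisfying it coincide, and since all feasible profiles have the same total, it
also gives minimality of the load variance.
-/

theorem StrictConvexOn.map_add_add_map_sub_lt {s : Set ℝ} {f : ℝ → ℝ}
    (hf : StrictConvexOn ℝ s f) {a b ε : ℝ} (ha : a ∈ s) (hb : b ∈ s) (hε : 0 < ε)
    (hεab : ε < b - a) :
    f (a + ε) + f (b - ε) < f a + f b := by
  have hba : 0 < b - a := hε.trans hεab
  set μ := ε / (b - a)
  have hμ0 : 0 < μ := div_pos hε hba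
  have hμ1 : μ < 1 := (div_lt_one hba).2 hεab
  have hμε : μ * (b - a) = ε := div_mul_cancel₀ ε hba.ne'
  have hab : a ≠ b := by linarith
  have h₁ := hf.2 ha hb hab (sub_pos.2 hμ1) hμ0 (sub_add_cancel 1 μ)
  have h₂ := hf.2 ha hb hab hμ0 (sub_pos.2 hμ1) (add_sub_cancel μ 1)
  simp only [smul_eq_mul] at h₁ h₂
  rw [show (1 - μ) * a + μ * b = a + ε by linear_combination hμε] at h₁
  rw [show μ * a + (1 - μ) * b = b - ε by linear_combination -hμε] at h₂
  linarith

theorem mul_sum_Icc_le_sum_Icc_mul {T : ℕ} {L d : ℕ → ℝ}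
    (h : ∀ m, m + 1 ≤ T → L (m + 1) * ∑ t ∈ Icc 1 m, d t ≤ L m * ∑ t ∈ Icc 1 m, d t) :
    ∀ m ≤ T, L m * ∑ t ∈ Icc 1 m, d t ≤ ∑ t ∈ Icc 1 m, L t * d t := by
  intro m
  induction m with
  | zero => simp
  | succ m ih =>
    intro hm
    rw [sum_Icc_succ_top (by omega), sum_Icc_succ_top (by omega), mul_add]
    linarith [h m hm, ih (by omega)]

theorem Finset.eq_of_sum_mul_sub_nonneg {ι : Type*} {s : Finset ι} {a b : ι → ℝ}
    (hab : 0 ≤ ∑ i ∈ s, a i * (b i - a i)) (hba : 0 ≤ ∑ i ∈ s, b i * (a i - b i)) :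
    ∀ i ∈ s, a i = b i := by
  have hsq : ∑ i ∈ s, (a i - b i) ^ 2 =
      -(∑ i ∈ s, a i * (b i - a i) + ∑ i ∈ s, b i * (a i - b i)) := by
    rw [← sum_add_distrib, ← sum_neg_distrib]
    exact sum_congr rfl fun i _ => by ring
  have hzero := (sum_eq_zero_iff_of_nonneg fun i _ => sq_nonneg (a i - b i)).1
    (le_antisymm (by linarith) (sum_nonneg fun i _ => sq_nonneg _))
  intro i hi
  exact sub_eq_zero.1 (pow_eq_zero_iff two_ne_zero |>.1 (hzero i hi))

theorem Finset.sum_sq_sub_le_of_sum_mul_sub_nonneg {ι : Type*} {s : Finset ι}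
    {a b : ι → ℝ}
    (hab : 0 ≤ ∑ i ∈ s, a i * (b i - a i)) (hsum : ∑ i ∈ s, b i = ∑ i ∈ s, a i) (c : ℝ) :
    ∑ i ∈ s, (a i - c) ^ 2 ≤ ∑ i ∈ s, (b i - c) ^ 2 := by
  have hexpand : ∑ i ∈ s, (b i - c) ^ 2 =
      ∑ i ∈ s, (a i - c) ^ 2 + ∑ i ∈ s, (b i - a i) ^ 2
      + 2 * ∑ i ∈ s, a i * (b i - a i) - 2 * c * (∑ i ∈ s, b i - ∑ i ∈ s, a i) := by
    simp only [mul_sum, ← sum_add_distrib, ← sum_sub_distrib]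
    exact sum_congr rfl fun i _ => by ring
  rw [hexpand, hsum, sub_self, mul_zero, sub_zero]
  linarith [sum_nonneg fun i (_ : i ∈ s) => sq_nonneg (b i - a i)]

def transfer (x : ℕ → ℝ) (n : ℕ) (ε : ℝ) : ℕ → ℝ :=
  x + Pi.single n ε - Pi.single (n + 1) ε

theorem sum_Icc_transfer (x : ℕ → ℝ) {n : ℕ} (ε : ℝ) (hn : 1 ≤ n) (m : ℕ) :
    ∑ t ∈ Icc 1 m, transfer x n ε t = ∑ t ∈ Icc 1 m, x t + if m = n then ε else 0 := by
  simp only [transfer, Pi.add_apply, Pi.sub_apply, sum_sub_distrib, sum_add_distrib,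
    sum_pi_single', mem_Icc]
  split_ifs <;> first | omega | ring

theorem sum_comp_transfer (φ : ℝ → ℝ) (x l : ℕ → ℝ) {n T : ℕ} (ε : ℝ) (hn : 1 ≤ n)
    (hnT : n + 1 ≤ T) :
    ∑ t ∈ Icc 1 T, φ (transfer x n ε t + l t) - ∑ t ∈ Icc 1 T, φ (x t + l t) =
      (φ (x n + l n + ε) - φ (x n + l n)) +
        (φ (x (n + 1) + l (n + 1) - ε) - φ (x (n + 1) + l (n + 1))) := by
  rw [← sum_sub_distrib, sum_eq_add_of_mem n (n + 1) (mem_Icc.2 ⟨hn, by omega⟩)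
    (mem_Icc.2 ⟨by omega, hnT⟩) n.succ_ne_self.symm]
  · simp [transfer, add_right_comm _ ε, sub_add_eq_add_sub]
  · intro t _ ht
    simp [transfer, ht.1, ht.2]

section Feasibility

variable {T : ℕ} {Dm Dp : ℕ → ℝ}

theorem AggFeasible.transfer {x : ℕ → ℝ} (hx : AggFeasible T Dm Dp x) {n : ℕ} {ε : ℝ}
    (hn : 1 ≤ n) (hlo : Dm n ≤ ∑ t ∈ Icc 1 n, x t + ε)
    (hhi : ∑ t ∈ Icc 1 n, x t + ε ≤ Dp n) :
    AggFeasible T Dm Dp (transfer x n ε) := by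
  intro m hm hmT
  rw [sum_Icc_transfer x ε hn]
  split_ifs with hmn
  · subst hmn
    exact ⟨hlo, hhi⟩
  · simpa using hx m hm hmT

theorem AggFeasible.sum_eq (hD : Dm T = Dp T) {x w : ℕ → ℝ} (hw : AggFeasible T Dm Dp w)
    (hx : AggFeasible T Dm Dp x) :
    ∑ t ∈ Icc 1 T, w t = ∑ t ∈ Icc 1 T, x t := by
  rcases T.eq_zero_or_pos with rfl | hT
  · simp
  · have hw := hw T hT le_rfl
    have hx := hx T hT le_rfl
    linarith

end Feasibility

def TransferStable (T : ℕ) (Dm Dp l x : ℕ → ℝ) : Prop :=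
  ∀ n, 1 ≤ n → n + 1 ≤ T →
    (∑ t ∈ Icc 1 n, x t < Dp n → x (n + 1) + l (n + 1) ≤ x n + l n) ∧
    (Dm n < ∑ t ∈ Icc 1 n, x t → x n + l n ≤ x (n + 1) + l (n + 1))

section Optimality

variable {T : ℕ} {Dm Dp l x : ℕ → ℝ}

theorem transferStable_of_forall_le {f : ℝ → ℝ} (hf : StrictConvexOn ℝ Set.univ f)
    (hx : AggFeasible T Dm Dp x)
    (hopt : ∀ s, AggFeasible T Dm Dp s →
      ∑ t ∈ Icc 1 T, f (x t + l t) ≤ ∑ t ∈ Icc 1 T, f (s t + l t)) :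
    TransferStable T Dm Dp l x := by
  intro n hn hnT
  obtain ⟨hlo, hhi⟩ := hx n hn (by omega)
  set a := x n + l n
  set b := x (n + 1) + l (n + 1)
  set S := ∑ t ∈ Icc 1 n, x t
  have no_gain : ∀ ε, Dm n ≤ S + ε → S + ε ≤ Dp n → f a + f b ≤ f (a + ε) + f (b - ε) :=
    fun ε hε₁ hε₂ => by
      linarith [hopt _ (hx.transfer hn hε₁ hε₂), sum_comp_transfer f x l ε hn hnT]
  constructor
  · intro hslack
    by_contra! hab
    obtain ⟨ε, hε, hεmin⟩ := exists_between (lt_min (sub_pos.2 hslack) (sub_pos.2 hab))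
    rw [lt_min_iff] at hεmin
    linarith [no_gain ε (by linarith) (by linarith),
      hf.map_add_add_map_sub_lt (Set.mem_univ a) (Set.mem_univ b) hε hεmin.2]
  · intro hslack
    by_contra! hba
    obtain ⟨δ, hδ, hδmin⟩ := exists_between (lt_min (sub_pos.2 hslack) (sub_pos.2 hba))
    rw [lt_min_iff] at hδmin
    have := no_gain (-δ) (by linarith) (by linarith)
    rw [← sub_eq_add_neg, sub_neg_eq_add] at this
    linarith [hf.map_add_add_map_sub_lt (Set.mem_univ b) (Set.mem_univ a) hδ hδmin.2]

theorem TransferStable.sum_mul_sub_nonneg (hD : Dm T = Dp T)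
    (hst : TransferStable T Dm Dp l x)
    (hx : AggFeasible T Dm Dp x) {w : ℕ → ℝ} (hw : AggFeasible T Dm Dp w) :
    0 ≤ ∑ t ∈ Icc 1 T, (x t + l t) * ((w t + l t) - (x t + l t)) := by
  simp only [add_sub_add_right_eq_sub]
  have hstep : ∀ m, m + 1 ≤ T →
      (x (m + 1) + l (m + 1)) * ∑ t ∈ Icc 1 m, (w t - x t) ≤
        (x m + l m) * ∑ t ∈ Icc 1 m, (w t - x t) := by
    intro m hmT
    rcases m.eq_zero_or_pos with rfl | hm
    · simp
    have hwm := hw m hm (by omega)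
    rw [sum_sub_distrib]
    rcases lt_trichotomy (∑ t ∈ Icc 1 m, w t) (∑ t ∈ Icc 1 m, x t) with hlt | heq | hgt
    · exact mul_le_mul_of_nonpos_right ((hst m hm hmT).2 (by linarith)) (by linarith)
    · simp [heq]
    · exact mul_le_mul_of_nonneg_right ((hst m hm hmT).1 (by linarith)) (by linarith)
  have := mul_sum_Icc_le_sum_Icc_mul (L := fun t => x t + l t) (d := fun t => w t - x t)
    hstep T le_rfl
  rwa [sum_sub_distrib, hw.sum_eq hD hx, sub_self, mul_zero] at this

end Optimality

theorem optimal_profile_invariance_general (T : ℕ)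
    (Dm Dp : ℕ → ℝ) (hDtot : Dm T = Dp T) (l : ℕ → ℝ)
    (f g : ℝ → ℝ)
    (hfconv : StrictConvexOn ℝ Set.univ f)
    (hgconv : StrictConvexOn ℝ Set.univ g)
    (s1 s2 : ℕ → ℝ)
    (hs1 : AggFeasible T Dm Dp s1)
    (hs1opt : ∀ s, AggFeasible T Dm Dp s →
      (∑ t ∈ Finset.Icc 1 T, f (s1 t + l t)) ≤ ∑ t ∈ Finset.Icc 1 T, f (s t + l t))
    (hs2 : AggFeasible T Dm Dp s2)
    (hs2opt : ∀ s, AggFeasible T Dm Dp s →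
      (∑ t ∈ Finset.Icc 1 T, g (s2 t + l t)) ≤ ∑ t ∈ Finset.Icc 1 T, g (s t + l t)) :
    (∀ t, 1 ≤ t → t ≤ T → s1 t = s2 t) ∧
    (∀ s, AggFeasible T Dm Dp s →
      (∑ t ∈ Finset.Icc 1 T,
          (s1 t + l t - (Dm T + ∑ t ∈ Finset.Icc 1 T, l t) / T) ^ 2) ≤
        ∑ t ∈ Finset.Icc 1 T,
          (s t + l t - (Dm T + ∑ t ∈ Finset.Icc 1 T, l t) / T) ^ 2) := by
  have hst1 := transferStable_of_forall_le hfconv hs1 hs1opt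
  have hst2 := transferStable_of_forall_le hgconv hs2 hs2opt
  refine ⟨fun t ht1 htT => ?_, fun s hs => ?_⟩
  · have := eq_of_sum_mul_sub_nonneg (a := fun t => s1 t + l t) (b := fun t => s2 t + l t)
      (hst1.sum_mul_sub_nonneg hDtot hs1 hs2)
      (hst2.sum_mul_sub_nonneg hDtot hs2 hs1) t (mem_Icc.2 ⟨ht1, htT⟩)
    exact add_right_cancel this
  · refine sum_sq_sub_le_of_sum_mul_sub_nonneg (hst1.sum_mul_sub_nonneg hDtot hs1 hs) ?_ _
    simp only [sum_add_distrib, hs.sum_eq hDtot hs1]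

/-- Theorem 2: the optimal aggregate profile of the offline problem is the same
for every strictly convex, increasing, differentiable cost `f`, and it minimizes
the load variance `∑ (s_t + l_t − L̄)²`, where `L̄` is the (constant) average
total load. -/
theorem optimal_profile_invariance (T : ℕ) (hT : 0 < T)
    (Dm Dp : ℕ → ℝ) (hDtot : Dm T = Dp T) (l : ℕ → ℝ)
    (f g : ℝ → ℝ)
    (hfconv : StrictConvexOn ℝ Set.univ f) (hfmono : StrictMono f)
    (hfdiff : Differentiable ℝ f)
    (hgconv : StrictConvexOn ℝ Set.univ g) (hgmono : StrictMono g)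
    (hgdiff : Differentiable ℝ g)
    (s1 s2 : ℕ → ℝ)
    (hs1 : AggFeasible T Dm Dp s1)
    (hs1opt : ∀ s, AggFeasible T Dm Dp s →
      (∑ t ∈ Finset.Icc 1 T, f (s1 t + l t)) ≤ ∑ t ∈ Finset.Icc 1 T, f (s t + l t))
    (hs2 : AggFeasible T Dm Dp s2)
    (hs2opt : ∀ s, AggFeasible T Dm Dp s →
      (∑ t ∈ Finset.Icc 1 T, g (s2 t + l t)) ≤ ∑ t ∈ Finset.Icc 1 T, g (s t + l t)) :
    (∀ t, 1 ≤ t → t ≤ T → s1 t = s2 t) ∧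
    (∀ s, AggFeasible T Dm Dp s →
      (∑ t ∈ Finset.Icc 1 T,
          (s1 t + l t - (Dm T + ∑ t ∈ Finset.Icc 1 T, l t) / T) ^ 2) ≤
        ∑ t ∈ Finset.Icc 1 T,
          (s t + l t - (Dm T + ∑ t ∈ Finset.Icc 1 T, l t) / T) ^ 2) :=
  optimal_profile_invariance_general T Dm Dp hDtot l f g hfconv hgconv s1 s2 hs1 hs1opt hs2 hs2opt
end

section
/- Under the MPC (expected value) policy, the charging rate s_t chosen at any stage t satisfies s_t ≤ sum over (m,n) ∈ O(t) of η_n^m, where O(t) = {(m,n) : e_m ≥ t, 1 ≤ m ≤ t, t ≤ n ≤ e_m} indexes the demands that have arrived by time t and have deadline at or after t. Consequently the expected MPC cost satisfies Φ₃ ≤ E[ sum_{t=1}^T f( sum_{(m,n)∈O(t)} η_n^m + ι_t ) ]. -/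
open Finset MeasureTheory

/-!
Whatever the MPC policy removes at stage `t`, the EDF update never lets the residual demand
`d̃_n^t` of a deadline `n` exceed the total demand `∑_{m ≤ t} η_n^m` with that deadline that has
arrived so far. Summing over the deadlines `t ≤ n ≤ T` allowed by the MPC constraint, and
discarding the deadlines beyond `e_m`, which carry no demand, bounds `s_t`; the cost bound follows
from the monotonicity of `f` and of the integral.
-/

lemma le_sum_Icc_one_of_le_max_zero_add {d a : ℕ → ℝ} (ha : ∀ t, 0 ≤ a t) (h₁ : d 1 ≤ a 1)
    (hstep : ∀ t, 1 ≤ t → d (t + 1) ≤ max (d t) 0 + a (t + 1)) {t : ℕ} (ht : 1 ≤ t) :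
    d t ≤ ∑ m ∈ Icc 1 t, a m := by
  induction t, ht using Nat.le_induction with
  | base => simpa using h₁
  | succ t ht ih =>
    rw [sum_Icc_succ_top (by omega)]
    calc d (t + 1) ≤ max (d t) 0 + a (t + 1) := hstep t ht
      _ ≤ ∑ m ∈ Icc 1 t, a m + a (t + 1) := by
        gcongr
        exact max_le ih (sum_nonneg fun m _ => ha m)

lemma sum_Icc_le_sum_Icc_of_eq_zero_of_lt {α M : Type*} [LinearOrder α] [LocallyFiniteOrder α]
    [AddCommMonoid M] [PartialOrder M] [IsOrderedAddMonoid M] {g : α → M} {b : α}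
    (hg : ∀ n, 0 ≤ g n) (hb : ∀ n, b < n → g n = 0) (a c : α) :
    ∑ n ∈ Icc a c, g n ≤ ∑ n ∈ Icc a b, g n := by
  classical
  calc ∑ n ∈ Icc a c, g n = ∑ n ∈ Icc a c with n ≤ b, g n :=
        (sum_filter_of_ne fun n _ hn => not_lt.1 fun hbn => hn (hb n hbn)).symm
    _ ≤ ∑ n ∈ Icc a b, g n := by
      refine sum_le_sum_of_subset_of_nonneg (fun n hn => ?_) fun n _ _ => hg n
      simp only [mem_filter, mem_Icc] at hn ⊢
      exact ⟨hn.1.1, hn.2⟩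

theorem residual_le_sum_Icc_arrivals {η d : ℕ → ℕ → ℝ} {s : ℕ → ℝ} (hη : ∀ m n, 0 ≤ η m n)
    (hinit : ∀ n, d 1 n = η 1 n)
    (hupd : ∀ t n, 1 ≤ t →
      d (t + 1) n = max (d t n - max (s t - ∑ j ∈ Ico t n, d t j) 0) 0 + η (t + 1) n)
    {t : ℕ} (ht : 1 ≤ t) (n : ℕ) :
    d t n ≤ ∑ m ∈ Icc 1 t, η m n :=
  le_sum_Icc_one_of_le_max_zero_add (d := (d · n)) (fun m => hη m n) (hinit n).le
    (fun t ht => by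
      rw [hupd t n ht]
      gcongr
      exact sub_le_self _ (le_max_right _ _))
    ht

theorem mpc_cost_upper_bound_general
    {Ω : Type*} [MeasurableSpace Ω] (μ : Measure Ω)
    (T : ℕ) (f : ℝ → ℝ) (hf : Monotone f)
    (η : Ω → ℕ → ℕ → ℝ)    -- η ω m n : demand arriving at time m with deadline n
    (ι : Ω → ℕ → ℝ)        -- base load
    (e : Ω → ℕ → ℕ)        -- latest deadline among arrivals at time m
    (dtil : Ω → ℕ → ℕ → ℝ) -- dtil ω t n : residual demand at time t with deadline n
    (s : Ω → ℕ → ℝ)        -- MPC charging rates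
    (hη : ∀ ω m n, 0 ≤ η ω m n)
    (hηz : ∀ ω m n, (n < m ∨ e ω m < n) → η ω m n = 0)
    (hinit : ∀ ω n, dtil ω 1 n = η ω 1 n)
    (hupd : ∀ ω t n, 1 ≤ t →
      dtil ω (t + 1) n =
        max (dtil ω t n - max (s ω t - ∑ j ∈ Finset.Ico t n, dtil ω t j) 0) 0
          + η ω (t + 1) n)
    (hcon : ∀ ω t, 1 ≤ t → t ≤ T →
      dtil ω t t ≤ s ω t ∧ s ω t ≤ ∑ n ∈ Finset.Icc t T, dtil ω t n)
    (Φ₃ : ℝ)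
    (hΦ₃ : Φ₃ = ∫ ω, ∑ t ∈ Finset.Icc 1 T, f (s ω t + ι ω t) ∂μ)
    (hint1 : Integrable (fun ω => ∑ t ∈ Finset.Icc 1 T, f (s ω t + ι ω t)) μ)
    (hint2 : Integrable (fun ω => ∑ t ∈ Finset.Icc 1 T,
      f ((∑ m ∈ Finset.Icc 1 t, ∑ n ∈ Finset.Icc t (e ω m), η ω m n) + ι ω t)) μ) :
    (∀ ω t, 1 ≤ t → t ≤ T →
      s ω t ≤ ∑ m ∈ Finset.Icc 1 t, ∑ n ∈ Finset.Icc t (e ω m), η ω m n) ∧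
    Φ₃ ≤ ∫ ω, ∑ t ∈ Finset.Icc 1 T,
      f ((∑ m ∈ Finset.Icc 1 t, ∑ n ∈ Finset.Icc t (e ω m), η ω m n) + ι ω t) ∂μ := by
  have hs : ∀ ω t, 1 ≤ t → t ≤ T →
      s ω t ≤ ∑ m ∈ Icc 1 t, ∑ n ∈ Icc t (e ω m), η ω m n := fun ω t ht htT =>
    calc s ω t ≤ ∑ n ∈ Icc t T, dtil ω t n := (hcon ω t ht htT).2
      _ ≤ ∑ n ∈ Icc t T, ∑ m ∈ Icc 1 t, η ω m n := sum_le_sum fun n _ =>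
          residual_le_sum_Icc_arrivals (hη ω) (hinit ω) (hupd ω) ht n
      _ = ∑ m ∈ Icc 1 t, ∑ n ∈ Icc t T, η ω m n := sum_comm
      _ ≤ ∑ m ∈ Icc 1 t, ∑ n ∈ Icc t (e ω m), η ω m n := sum_le_sum fun m _ =>
          sum_Icc_le_sum_Icc_of_eq_zero_of_lt (hη ω m) (fun n hn => hηz ω m n (.inr hn)) t T
  refine ⟨hs, hΦ₃ ▸ integral_mono hint1 hint2 fun ω => sum_le_sum fun t ht => hf ?_⟩
  obtain ⟨ht, htT⟩ := mem_Icc.1 ht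
  exact add_le_add_left (hs ω t ht htT) _

/-- Proposition 2: under the MPC policy with the EDF state update, the rate
chosen at stage `t` is bounded by the total demand that has arrived by time `t`
with deadline at or after `t`; consequently, the expected MPC cost `Φ₃` is
bounded by `E[∑_t f(∑_{(m,n)∈O(t)} η_n^m + ι_t)]`. -/
theorem mpc_cost_upper_bound
    {Ω : Type*} [MeasurableSpace Ω] (μ : Measure Ω) [IsProbabilityMeasure μ]
    (T : ℕ) (f : ℝ → ℝ) (hf : Monotone f)
    (η : Ω → ℕ → ℕ → ℝ)    -- η ω m n : demand arriving at time m with deadline n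
    (ι : Ω → ℕ → ℝ)        -- base load
    (e : Ω → ℕ → ℕ)        -- latest deadline among arrivals at time m
    (dtil : Ω → ℕ → ℕ → ℝ) -- dtil ω t n : residual demand at time t with deadline n
    (s : Ω → ℕ → ℝ)        -- MPC charging rates
    (hη : ∀ ω m n, 0 ≤ η ω m n)
    (hηz : ∀ ω m n, (n < m ∨ e ω m < n) → η ω m n = 0)
    (hd : ∀ ω t n, 0 ≤ dtil ω t n)
    (hinit : ∀ ω n, dtil ω 1 n = η ω 1 n)
    (hupd : ∀ ω t n, 1 ≤ t →
      dtil ω (t + 1) n =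
        max (dtil ω t n - max (s ω t - ∑ j ∈ Finset.Ico t n, dtil ω t j) 0) 0
          + η ω (t + 1) n)
    (hcon : ∀ ω t, 1 ≤ t → t ≤ T →
      dtil ω t t ≤ s ω t ∧ s ω t ≤ ∑ n ∈ Finset.Icc t T, dtil ω t n)
    (Φ₃ : ℝ)
    (hΦ₃ : Φ₃ = ∫ ω, ∑ t ∈ Finset.Icc 1 T, f (s ω t + ι ω t) ∂μ)
    (hint1 : Integrable (fun ω => ∑ t ∈ Finset.Icc 1 T, f (s ω t + ι ω t)) μ)
    (hint2 : Integrable (fun ω => ∑ t ∈ Finset.Icc 1 T,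
      f ((∑ m ∈ Finset.Icc 1 t, ∑ n ∈ Finset.Icc t (e ω m), η ω m n) + ι ω t)) μ) :
    (∀ ω t, 1 ≤ t → t ≤ T →
      s ω t ≤ ∑ m ∈ Finset.Icc 1 t, ∑ n ∈ Finset.Icc t (e ω m), η ω m n) ∧
    Φ₃ ≤ ∫ ω, ∑ t ∈ Finset.Icc 1 T,
      f ((∑ m ∈ Finset.Icc 1 t, ∑ n ∈ Finset.Icc t (e ω m), η ω m n) + ι ω t) ∂μ :=
  mpc_cost_upper_bound_general μ T f hf η ι e dtil s hη hηz hinit hupd hcon Φ₃ hΦ₃ hint1 hint2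
end

section
/- Let (a_j)_{j≥1} be a p-periodic nonnegative sequence of slot weights (a_{j+p} = a_j), and for i ≤ j define the density ρ(i,j) = (a_i + ... + a_j)/(j − i + 1). If [ī, j̄] maximizes ρ over all subintervals of a window of length ê and j̄ ≥ ī + p (the maximizing interval spans at least one period), then ρ(ī, j̄ + p) ≥ ρ(ī, j̄); more generally ρ(ī, j̄ + kp) is nondecreasing in k, so the maximum density over the full horizon is attained at [ī, j̄ + (r−1)p] where r is the number of complete periods remaining. -/
/-!
Let `S` be the sum of the weights over one period, and `Σ`, `L` the sum and length of `[ī, j̄]`.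
The interval `[ī, j̄ - p]` also lies in the window, and its sum is `Σ - S`, so maximality gives
`(Σ - S) / (L - p) ≤ Σ / L`, i.e. `Σ / L ≤ S / p`. By periodicity
`ρ(ī, j̄ + k p) = (Σ + k S) / (L + k p)`, a mediant of `Σ / L` and `S / p` that moves towards
the larger one `S / p` as `k` grows.
-/

open Finset

/-- Interval density of a sequence: `ρ(i,j) = (a_i + ... + a_j)/(j − i + 1)`. -/
noncomputable def intervalDensity (a : ℕ → ℝ) (i j : ℕ) : ℝ :=
  (∑ t ∈ Finset.Icc i j, a t) / ((j : ℝ) - i + 1)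

namespace Function.Periodic

variable {M : Type*} [AddCommMonoid M] {a : ℕ → M} {p : ℕ}

theorem sum_Ico_add_period (hper : Periodic a p) (m : ℕ) :
    ∑ t ∈ Ico m (m + p), a t = ∑ t ∈ range p, a t := by
  induction m with
  | zero => simp
  | succ m ih =>
    rcases Nat.eq_zero_or_pos p with rfl | hp
    · simp
    rw [← ih, sum_eq_sum_Ico_succ_bot (show m < m + p by omega),
      show m + 1 + p = m + p + 1 by omega, sum_Ico_succ_top (show m + 1 ≤ m + p by omega), hper,
      add_comm]

theorem sum_Icc_add_mul_period (hper : Periodic a p) {i j : ℕ} (hij : i ≤ j + 1) (k : ℕ) :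
    ∑ t ∈ Icc i (j + k * p), a t = ∑ t ∈ Icc i j, a t + k • ∑ t ∈ range p, a t := by
  induction k with
  | zero => simp
  | succ k ih =>
    rw [← Ico_add_one_right_eq_Icc] at ih ⊢
    rw [show j + (k + 1) * p + 1 = j + k * p + 1 + p by ring,
      ← sum_Ico_consecutive a (show i ≤ j + k * p + 1 by omega) (Nat.le_add_right _ p), ih,
      hper.sum_Ico_add_period, succ_nsmul, add_assoc]

end Function.Periodic

theorem monotone_add_mul_div_add_mul {x y u v : ℝ} (hu : 0 < u) (hv : 0 ≤ v)
    (hle : x * v ≤ y * u) : Monotone fun k : ℕ => (x + k * y) / (u + k * v) := by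
  refine monotone_nat_of_le_succ fun k => ?_
  have hk : (0 : ℝ) ≤ k := k.cast_nonneg
  rw [div_le_div_iff₀ (by positivity) (by positivity)]
  push_cast
  nlinarith

variable {a : ℕ → ℝ} {p : ℕ}

theorem intervalDensity_add_mul_period (hper : Function.Periodic a p) {i j : ℕ} (hij : i ≤ j)
    (k : ℕ) :
    intervalDensity a i (j + k * p) =
      (∑ t ∈ Icc i j, a t + k * ∑ t ∈ range p, a t) / ((j - i + 1 : ℝ) + k * p) := by
  rw [intervalDensity, hper.sum_Icc_add_mul_period (by omega), nsmul_eq_mul]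
  push_cast
  ring_nf

theorem sum_Icc_mul_period_le (hper : Function.Periodic a p) {i j : ℕ} (hspan : i + p ≤ j)
    (hle : intervalDensity a i (j - p) ≤ intervalDensity a i j) :
    (∑ t ∈ Icc i j, a t) * p ≤ (∑ t ∈ range p, a t) * (j - i + 1) := by
  have hsplit := hper.sum_Icc_add_mul_period (i := i) (j := j - p) (by omega) 1
  rw [one_mul, Nat.sub_add_cancel (by omega), one_nsmul] at hsplit
  have hcast : ((j - p : ℕ) : ℝ) = j - p := by push_cast [show p ≤ j by omega]; ring
  have hlen : (i : ℝ) + p ≤ j := by exact_mod_cast hspan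
  rw [intervalDensity, intervalDensity, hcast, hsplit,
    div_le_div_iff₀ (by linarith) (by linarith)] at hle
  nlinarith

theorem periodic_density_append_period_general (a : ℕ → ℝ) (p : ℕ)
    (hper : ∀ t, a (t + p) = a t)
    (lo ehat ibar jbar : ℕ)
    (hlo : lo ≤ ibar) (hwin : jbar ≤ lo + ehat)
    (hspan : ibar + p ≤ jbar)
    (hmax : ∀ i j, lo ≤ i → i ≤ j → j ≤ lo + ehat →
      intervalDensity a i j ≤ intervalDensity a ibar jbar) :
    intervalDensity a ibar jbar ≤ intervalDensity a ibar (jbar + p) ∧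
      Monotone (fun k : ℕ => intervalDensity a ibar (jbar + k * p)) := by
  have hij : ibar ≤ jbar := by omega
  have hlen : (0 : ℝ) < jbar - ibar + 1 := by
    have : (ibar : ℝ) ≤ jbar := by exact_mod_cast hij
    linarith
  have hkey := sum_Icc_mul_period_le hper hspan (hmax ibar (jbar - p) hlo (by omega) (by omega))
  have hmono : Monotone (fun k : ℕ => intervalDensity a ibar (jbar + k * p)) := by
    simp only [intervalDensity_add_mul_period hper hij]
    exact monotone_add_mul_div_add_mul hlen p.cast_nonneg hkey
  exact ⟨by simpa using hmono zero_le_one, hmono⟩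

/-- Lemma 1 (case `j̄ ≥ ī + p`): for a `p`-periodic nonnegative weight sequence,
if `[ī, j̄]` maximizes the density over subintervals of a window of length `ê`
and spans at least one period, then appending a period does not decrease the
density: `ρ(ī, j̄ + p) ≥ ρ(ī, j̄)`, and more generally `ρ(ī, j̄ + k·p)` is
nondecreasing in `k`. -/
theorem periodic_density_append_period (a : ℕ → ℝ) (p : ℕ) (hp : 1 ≤ p)
    (ha : ∀ t, 0 ≤ a t) (hper : ∀ t, a (t + p) = a t)
    (lo ehat ibar jbar : ℕ)
    (hlo : lo ≤ ibar) (hij : ibar ≤ jbar) (hwin : jbar ≤ lo + ehat)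
    (hspan : ibar + p ≤ jbar)
    (hmax : ∀ i j, lo ≤ i → i ≤ j → j ≤ lo + ehat →
      intervalDensity a i j ≤ intervalDensity a ibar jbar) :
    intervalDensity a ibar jbar ≤ intervalDensity a ibar (jbar + p) ∧
      Monotone (fun k : ℕ => intervalDensity a ibar (jbar + k * p)) :=
  periodic_density_append_period_general a p hper lo ehat ibar jbar hlo hwin hspan hmax
end

section
/- For a p-periodic nonnegative sequence with interval density ρ(i,j) = (sum_{t=i}^j a_t)/(j−i+1): if the maximum-density interval [ī, j̄] within one period window satisfies j̄ < ī + p, then appending a full period strictly does not increase density, i.e. ρ(ī, j̄ + p) ≤ ρ(ī, j̄), and inductively ρ(ī, j̄ + kp) ≤ ρ(ī, j̄) for all k ≥ 0; hence [ī, j̄] is a maximum-density interval over the whole horizon. -/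
open Finset

/-! Writing `ρ̄ = ρ(ī, j̄)`, maximality applied to the period `[lo, lo + p − 1]` inside the window gives
`∑_{t<p} a_t ≤ ρ̄ p`. By periodicity, `[ī, j̄ + k p]` is `[ī, j̄]` followed by `k` blocks of `p`
consecutive terms, each summing to `∑_{t<p} a_t`, so its sum is at most `ρ̄ (j̄ − ī + 1) + k ρ̄ p`,
i.e. `ρ̄` times its length. -/

namespace Function.Periodic

variable {M : Type*} [AddCommMonoid M] {a : ℕ → M} {p : ℕ}

theorem sum_range_shift (hper : Periodic a p) (m : ℕ) :
    ∑ t ∈ range p, a (m + t) = ∑ t ∈ range p, a t := by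
  induction m with
  | zero => simp
  | succ m ih =>
    rw [← ih]
    rcases p with _ | q
    · simp
    · rw [sum_range_succ, sum_range_succ']
      congr 1
      · exact sum_congr rfl fun t _ => by rw [add_assoc, add_comm 1 t]
      · rw [add_zero, add_assoc, add_comm 1 q, hper]

theorem sum_range_add_mul (hper : Periodic a p) (i n k : ℕ) :
    ∑ t ∈ range (n + k * p), a (i + t) =
      ∑ t ∈ range n, a (i + t) + k • ∑ t ∈ range p, a t := by
  induction k with
  | zero => simp
  | succ k ih =>
    rw [add_mul, one_mul, ← add_assoc, sum_range_add, ih, succ_nsmul, add_assoc]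
    simp_rw [← add_assoc i, hper.sum_range_shift]

end Function.Periodic

theorem intervalDensity_self_add (a : ℕ → ℝ) (i n : ℕ) :
    intervalDensity a i (i + n) = (∑ t ∈ range (n + 1), a (i + t)) / (n + 1) := by
  rw [intervalDensity, ← Ico_add_one_right_eq_Icc, sum_Ico_eq_sum_range,
    add_assoc, Nat.add_sub_cancel_left]
  push_cast
  ring_nf

theorem Function.Periodic.intervalDensity_add_mul_le {a : ℕ → ℝ} {p : ℕ} (hper : Periodic a p)
    {c : ℝ} (hperiod : ∑ t ∈ range p, a t ≤ c * p) {i n : ℕ}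
    (hin : intervalDensity a i (i + n) ≤ c) (k : ℕ) :
    intervalDensity a i (i + n + k * p) ≤ c := by
  rw [intervalDensity_self_add, div_le_iff₀ (by positivity)] at hin
  rw [add_assoc, intervalDensity_self_add, div_le_iff₀ (by positivity), add_right_comm n,
    hper.sum_range_add_mul, nsmul_eq_mul]
  have hblocks := mul_le_mul_of_nonneg_left hperiod k.cast_nonneg
  push_cast
  linarith

theorem periodic_density_short_interval_general (a : ℕ → ℝ) (p : ℕ) (hp : 1 ≤ p)
    (hper : ∀ t, a (t + p) = a t)
    (lo ehat ibar jbar : ℕ) (hpe : p ≤ ehat + 1)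
    (hij : ibar ≤ jbar)
    (hmax : ∀ i j, lo ≤ i → i ≤ j → j ≤ lo + ehat →
      intervalDensity a i j ≤ intervalDensity a ibar jbar) :
    ∀ k : ℕ, intervalDensity a ibar (jbar + k * p) ≤ intervalDensity a ibar jbar := by
  obtain ⟨n, rfl⟩ := Nat.exists_eq_add_of_le hij
  obtain ⟨q, rfl⟩ := Nat.exists_eq_add_of_le' hp
  have hperiod : ∑ t ∈ range (q + 1), a t ≤ intervalDensity a ibar (ibar + n) * ↑(q + 1) := by
    have hfirst := hmax lo (lo + q) le_rfl (by omega) (by omega)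
    rw [intervalDensity_self_add, Function.Periodic.sum_range_shift hper,
      div_le_iff₀ (by positivity)] at hfirst
    exact_mod_cast hfirst
  exact Function.Periodic.intervalDensity_add_mul_le hper hperiod le_rfl

/-- Lemma 1 (case `j̄ < ī + p`): for a `p`-periodic nonnegative weight sequence,
if `[ī, j̄]` maximizes the density over subintervals of a window of length `ê`
(with `p ≤ ê + 1`, so a full period fits in the window) and `j̄ < ī + p`, then
appending full periods does not increase the density:
`ρ(ī, j̄ + k·p) ≤ ρ(ī, j̄)` for all `k ≥ 0`. -/
theorem periodic_density_short_interval (a : ℕ → ℝ) (p : ℕ) (hp : 1 ≤ p)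
    (ha : ∀ t, 0 ≤ a t) (hper : ∀ t, a (t + p) = a t)
    (lo ehat ibar jbar : ℕ) (hpe : p ≤ ehat + 1)
    (hlo : lo ≤ ibar) (hij : ibar ≤ jbar) (hwin : jbar ≤ lo + ehat)
    (hshort : jbar < ibar + p)
    (hmax : ∀ i j, lo ≤ i → i ≤ j → j ≤ lo + ehat →
      intervalDensity a i j ≤ intervalDensity a ibar jbar) :
    ∀ k : ℕ, intervalDensity a ibar (jbar + k * p) ≤ intervalDensity a ibar jbar :=
  periodic_density_short_interval_general a p hp hper lo ehat ibar jbar hpe hij hmax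
end
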